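/- Let M = (Q, Σ, δ, q0, F) be a total DFA and let ≃ ⊆ Q × Q be a congruence on M, i.e. an equivalence relation such that q1 ≃ q2 implies δ(q1, a) ≃ δ(q2, a) for all a ∈ Σ. Then there exists a DFA N = (P, Δ, μ, q0, F') with Q ⊆ P and Σ ⊆ Δ such that: (1) L_M(q) = L_N(q) ∩ Σ* and δ^{-1}(q) = μ^{-1}(q) for every q ∈ Q; (2) L_M(q1) △ L_M(q2) = L_N(q1) △ L_N(q2) for all q1 ≃ q2; (3) for every p1 ∈ P \ Q and every p2 ∈ P with p1 ≠ p2, the set L_N(p1) △ L_N(p2) is infinite; and (4) for all q1, q2 ∈ Q with q1 ≄ q2, the set L_N(q1) △ L_N(q2) is infinite. -/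

import Mathlib

/-- The distance `d(L, L')` between two languages: the least `ℓ ∈ ℕ` such that
`L` and `L'` agree on all words of length at least `ℓ` (with `min ∅ = ∞`). -/
noncomputable def langDist {α : Type} (L L' : Set (List α)) : ℕ∞ :=
  sInf {n : ℕ∞ | ∃ ℓ : ℕ, n = (ℓ : ℕ∞) ∧
    ∀ w : List α, ℓ ≤ w.length → (w ∈ L ↔ w ∈ L')}

/-- A deterministic finite automaton with a partial transition function. -/
structure PDFA (α σ : Type) where
  step : σ → α → Option σ
  start : σ
  accept : Set σ

namespace PDFA

variable {α σ : Type}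

/-- Running the partial DFA from state `q` on the word `w`. -/
def evalFrom (M : PDFA α σ) (q : σ) (w : List α) : Option σ :=
  w.foldl (fun o a => o.bind fun r => M.step r a) (some q)

/-- Running the partial DFA from the start state. -/
def eval (M : PDFA α σ) (w : List α) : Option σ :=
  M.evalFrom M.start w

/-- The right-language `L_M(q)` of the state `q`. -/
def rightLang (M : PDFA α σ) (q : σ) : Set (List α) :=
  {w | ∃ p ∈ M.accept, M.evalFrom q w = some p}

/-- The language recognised by the partial DFA. -/
def accepts (M : PDFA α σ) : Set (List α) :=
  {w | ∃ p ∈ M.accept, M.eval w = some p}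

/-- The left-language `δ⁻¹(q)` of the state `q`: all words leading to `q`. -/
def leftLang (M : PDFA α σ) (q : σ) : Set (List α) :=
  {w | M.eval w = some q}

/-- `in-level_M(q)`: the supremum of the lengths of words leading to `q`. -/
noncomputable def inLevel (M : PDFA α σ) (q : σ) : ℕ∞ :=
  ⨆ w ∈ M.leftLang q, (w.length : ℕ∞)

/-- A DFA is minimal if all states are reachable and have pairwise
distinct right-languages. -/
def IsMinimal (M : PDFA α σ) : Prop :=
  (∀ q : σ, ∃ w : List α, M.eval w = some q) ∧
  ∀ q p : σ, M.rightLang q = M.rightLang p → q = p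

end PDFA

/-- The distance between a state of `M` and a state of `N`. -/
noncomputable def stateDist {α σ τ : Type} (M : PDFA α σ) (N : PDFA α τ)
    (q : σ) (p : τ) : ℕ∞ :=
  langDist (M.rightLang q) (N.rightLang p)

/-- Two states `q` of `M` and `p` of `N` are `k`-similar if
`d(q, p) + min(k, in-level_M(q), in-level_N(p)) ≤ k`. -/
def kSimSt {α σ τ : Type} (M : PDFA α σ) (N : PDFA α τ) (k : ℕ) (q : σ) (p : τ) : Prop :=
  stateDist M N q p + min (k : ℕ∞) (min (M.inLevel q) (N.inLevel p)) ≤ (k : ℕ∞)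

/-- Two DFAs are `k`-similar if their languages differ only on words of length `< k`. -/
def kSimDFA {α σ τ : Type} (M : PDFA α σ) (N : PDFA α τ) (k : ℕ) : Prop :=
  ∀ w ∈ symmDiff M.accepts N.accepts, w.length < k

/-- The right-language of a state of a total DFA. -/
def DFA.rightLang {α σ : Type} (M : DFA α σ) (q : σ) : Set (List α) :=
  {w | M.evalFrom q w ∈ M.accept}

/-!
Adjoin to `M` an accepting sink `⊤` that loops on every letter, a fresh letter `c` on which
every old state is undefined, and for each state `s` a fresh letter `b_s` that sends `q` to `⊤`
exactly when `s ≃ q`. Then `c · Δ*` separates `⊤` from every old state and `b_{q₁} · Δ*`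
separates `q₁` from `q₂` whenever `q₁ ≄ q₂`. Congruent states, on the other hand, stay congruent
along every word of `Σ*` and then leave `Σ*` through the same `b`-letters, so they can only be
distinguished by words of `Σ*`.
-/

theorem Set.infinite_of_forall_cons_mem {α : Type*} {x : α} {S : Set (List α)}
    (h : ∀ w, x :: w ∈ S) : S.Infinite :=
  haveI : Nonempty α := ⟨x⟩
  Set.infinite_of_injective_forall_mem List.cons_injective h

namespace PDFA

variable {α σ : Type} (N : PDFA α σ)

@[simp]
theorem evalFrom_nil (q : σ) : N.evalFrom q [] = some q := rfl

theorem evalFrom_cons (q : σ) (a : α) (w : List α) :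
    N.evalFrom q (a :: w) = (N.step q a).bind (N.evalFrom · w) := by
  have foldl_none : ∀ v : List α,
      v.foldl (fun o a => o.bind fun r => N.step r a) none = none := by
    intro v
    induction v with
    | nil => rfl
    | cons _ _ ih => exact ih
  cases h : N.step q a <;> simp [evalFrom, h, foldl_none]

theorem evalFrom_cons_of_step_eq_some {q p : σ} {a : α} (h : N.step q a = some p)
    (w : List α) : N.evalFrom q (a :: w) = N.evalFrom p w := by
  rw [evalFrom_cons, h, Option.bind_some]

theorem evalFrom_cons_of_step_eq_none {q : σ} {a : α} (h : N.step q a = none) (w : List α) :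
    N.evalFrom q (a :: w) = none := by
  rw [evalFrom_cons, h, Option.bind_none]

theorem evalFrom_eq_of_step_eq_self {p : σ} (h : ∀ a, N.step p a = some p) (w : List α) :
    N.evalFrom p w = some p := by
  induction w with
  | nil => rfl
  | cons a w ih => rw [evalFrom_cons_of_step_eq_some N (h a), ih]

theorem rightLang_eq_univ_of_step_eq_self {p : σ} (hp : p ∈ N.accept)
    (h : ∀ a, N.step p a = some p) : N.rightLang p = Set.univ :=
  Set.eq_univ_of_forall fun w => ⟨p, hp, N.evalFrom_eq_of_step_eq_self h w⟩

theorem cons_mem_rightLang_of_step_eq_some {q p : σ} {a : α} (h : N.step q a = some p)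
    {w : List α} : a :: w ∈ N.rightLang q ↔ w ∈ N.rightLang p := by
  simp only [rightLang, Set.mem_ofPred_eq, N.evalFrom_cons_of_step_eq_some h]

theorem cons_notMem_rightLang_of_step_eq_none {q : σ} {a : α} (h : N.step q a = none)
    (w : List α) : a :: w ∉ N.rightLang q := by
  simp [rightLang, N.evalFrom_cons_of_step_eq_none h]

end PDFA

namespace DFA

open Sum Set

variable {α σ : Type} (M : DFA α σ) (r : σ → σ → Prop)

open Classical in
/-- States `σ ⊕ Unit`, where `inr ()` is the sink `⊤`; letters `α ⊕ Option σ`, where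
`inr none` is `c` and `inr (some s)` is `b_s`. -/
noncomputable def congruenceGadget : PDFA (α ⊕ Option σ) (σ ⊕ Unit) where
  step
    | inl q, inl a => some (inl (M.step q a))
    | inl _, inr none => none
    | inl q, inr (some s) => if r s q then some (inr ()) else none
    | inr (), _ => some (inr ())
  start := inl M.start
  accept := inl '' M.accept ∪ {inr ()}

@[simp]
theorem congruenceGadget_step_inl_inl (q : σ) (a : α) :
    (M.congruenceGadget r).step (inl q) (inl a) = some (inl (M.step q a)) := rfl

@[simp]
theorem congruenceGadget_step_inl_inr_none (q : σ) :
    (M.congruenceGadget r).step (inl q) (inr none) = none := rfl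

open Classical in
theorem congruenceGadget_step_inl_inr_some (q s : σ) :
    (M.congruenceGadget r).step (inl q) (inr (some s)) = if r s q then some (inr ()) else none :=
  rfl

theorem congruenceGadget_evalFrom_map_inl (q : σ) (u : List α) :
    (M.congruenceGadget r).evalFrom (inl q) (u.map inl) = some (inl (M.evalFrom q u)) := by
  induction u generalizing q with
  | nil => rfl
  | cons a u ih =>
    rw [List.map_cons, PDFA.evalFrom_cons_of_step_eq_some _ (M.congruenceGadget_step_inl_inl r q a),
      ih, evalFrom_cons]

theorem map_inl_mem_congruenceGadget_rightLang_inl {q : σ} {u : List α} :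
    u.map inl ∈ (M.congruenceGadget r).rightLang (inl q) ↔ u ∈ M.rightLang q := by
  simp only [PDFA.rightLang, mem_ofPred_eq, congruenceGadget_evalFrom_map_inl, Option.some.injEq]
  simp [congruenceGadget, DFA.rightLang]

theorem congruenceGadget_evalFrom_inr (w : List (α ⊕ Option σ)) :
    (M.congruenceGadget r).evalFrom (inr ()) w = some (inr ()) :=
  PDFA.evalFrom_eq_of_step_eq_self _ (fun _ => rfl) w

theorem congruenceGadget_rightLang_inr : (M.congruenceGadget r).rightLang (inr ()) = univ :=
  PDFA.rightLang_eq_univ_of_step_eq_self _ (Or.inr rfl) fun _ => rfl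

theorem exists_eq_map_of_congruenceGadget_evalFrom_eq_inl {p q : σ} {w : List (α ⊕ Option σ)}
    (h : (M.congruenceGadget r).evalFrom (inl p) w = some (inl q)) :
    ∃ u : List α, w = u.map inl ∧ M.evalFrom p u = q := by
  induction w generalizing p with
  | nil => exact ⟨[], rfl, by simpa using h⟩
  | cons x w ih =>
    rcases x with a | _ | s
    · obtain ⟨u, rfl, hu⟩ := ih (by rwa [PDFA.evalFrom_cons_of_step_eq_some _ rfl] at h)
      exact ⟨a :: u, rfl, hu⟩
    · simp [PDFA.evalFrom_cons] at h
    · rw [PDFA.evalFrom_cons, congruenceGadget_step_inl_inr_some] at h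
      split_ifs at h <;> simp [congruenceGadget_evalFrom_inr] at h

theorem congruenceGadget_rightLang_inl_inter (q : σ) :
    (M.congruenceGadget r).rightLang (inl q) ∩ {w | ∀ x ∈ w, ∃ a : α, x = inl a}
      = List.map inl '' M.rightLang q := by
  have pure_eq_range : {w : List (α ⊕ Option σ) | ∀ x ∈ w, ∃ a : α, x = inl a}
      = range (List.map inl) := by
    simp only [range_list_map, mem_range, eq_comm]
  ext w
  rw [pure_eq_range]
  constructor
  · rintro ⟨hw, u, rfl⟩
    exact ⟨u, (M.map_inl_mem_congruenceGadget_rightLang_inl r).1 hw, rfl⟩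
  · rintro ⟨u, hu, rfl⟩
    exact ⟨(M.map_inl_mem_congruenceGadget_rightLang_inl r).2 hu, u, rfl⟩

theorem congruenceGadget_leftLang_inl (q : σ) :
    (M.congruenceGadget r).leftLang (inl q) = List.map inl '' {w : List α | M.eval w = q} := by
  ext w
  constructor
  · intro h
    obtain ⟨u, rfl, hu⟩ := M.exists_eq_map_of_congruenceGadget_evalFrom_eq_inl r h
    exact ⟨u, hu, rfl⟩
  · rintro ⟨u, rfl : M.evalFrom M.start u = q, rfl⟩
    exact M.congruenceGadget_evalFrom_map_inl r M.start u

theorem congruenceGadget_evalFrom_eq_of_rel (hequiv : Equivalence r)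
    (hcong : ∀ (q1 q2 : σ) (a : α), r q1 q2 → r (M.step q1 a) (M.step q2 a))
    {q₁ q₂ : σ} (h : r q₁ q₂) {w : List (α ⊕ Option σ)} (hw : w ∉ range (List.map inl)) :
    (M.congruenceGadget r).evalFrom (inl q₁) w = (M.congruenceGadget r).evalFrom (inl q₂) w := by
  induction w generalizing q₁ q₂ with
  | nil => exact absurd ⟨[], rfl⟩ hw
  | cons x w ih =>
    rcases x with a | _ | s
    · rw [PDFA.evalFrom_cons_of_step_eq_some _ rfl, PDFA.evalFrom_cons_of_step_eq_some _ rfl]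
      exact ih (hcong _ _ a h) fun ⟨u, hu⟩ => hw ⟨a :: u, by rw [List.map_cons, hu]⟩
    · simp [PDFA.evalFrom_cons]
    · have hs : r s q₁ ↔ r s q₂ :=
        ⟨fun hs => hequiv.trans hs h, fun hs => hequiv.trans hs (hequiv.symm h)⟩
      simp only [PDFA.evalFrom_cons, congruenceGadget_step_inl_inr_some]
      by_cases hs₁ : r s q₁
      · rw [if_pos hs₁, if_pos (hs.1 hs₁)]
      · rw [if_neg hs₁, if_neg (mt hs.2 hs₁)]

theorem congruenceGadget_symmDiff_rightLang_inl (hequiv : Equivalence r)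
    (hcong : ∀ (q1 q2 : σ) (a : α), r q1 q2 → r (M.step q1 a) (M.step q2 a))
    {q₁ q₂ : σ} (h : r q₁ q₂) :
    symmDiff ((M.congruenceGadget r).rightLang (inl q₁)) ((M.congruenceGadget r).rightLang (inl q₂))
      = List.map inl '' symmDiff (M.rightLang q₁) (M.rightLang q₂) := by
  ext w
  by_cases hw : w ∈ range (List.map inl)
  · obtain ⟨u, rfl⟩ := hw
    simp only [mem_symmDiff, map_inl_mem_congruenceGadget_rightLang_inl,
      (List.map_injective_iff.2 Sum.inl_injective).mem_set_image]
  · have heq := M.congruenceGadget_evalFrom_eq_of_rel r hequiv hcong h hw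
    simp only [mem_symmDiff, PDFA.rightLang, mem_ofPred_eq, heq, and_not_self, or_self,
      false_iff]
    rintro ⟨u, -, rfl⟩
    exact hw ⟨u, rfl⟩

theorem congruenceGadget_symmDiff_rightLang_inr_infinite (t : Unit) {p : σ ⊕ Unit}
    (hp : inr t ≠ p) :
    (symmDiff ((M.congruenceGadget r).rightLang (inr t))
      ((M.congruenceGadget r).rightLang p)).Infinite := by
  cases t
  obtain ⟨q, rfl⟩ : ∃ q, p = inl q := by
    rcases p with q | ⟨⟩
    exacts [⟨q, rfl⟩, absurd rfl hp]
  exact infinite_of_forall_cons_mem (x := inr none) fun w => Or.inl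
    ⟨by simp [congruenceGadget_rightLang_inr],
      PDFA.cons_notMem_rightLang_of_step_eq_none _ rfl w⟩

theorem congruenceGadget_symmDiff_rightLang_inl_infinite (hrefl : ∀ q, r q q) {q₁ q₂ : σ}
    (h : ¬ r q₁ q₂) :
    (symmDiff ((M.congruenceGadget r).rightLang (inl q₁))
      ((M.congruenceGadget r).rightLang (inl q₂))).Infinite :=
  infinite_of_forall_cons_mem (x := inr (some q₁)) fun w => Or.inl
    ⟨(PDFA.cons_mem_rightLang_of_step_eq_some _
        ((M.congruenceGadget_step_inl_inr_some r _ _).trans (if_pos (hrefl q₁)))).2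
        (by simp [congruenceGadget_rightLang_inr]),
      PDFA.cons_notMem_rightLang_of_step_eq_none _
        ((M.congruenceGadget_step_inl_inr_some r _ _).trans (if_neg h)) w⟩

end DFA

theorem congruence_gadget_general {α σ : Type} [Fintype σ] (M : DFA α σ)
    (r : σ → σ → Prop) (hequiv : Equivalence r)
    (hcong : ∀ (q1 q2 : σ) (a : α), r q1 q2 → r (M.step q1 a) (M.step q2 a)) :
    ∃ (β τ : Type) (_ : Fintype β) (_ : Fintype τ) (N : PDFA (α ⊕ β) (σ ⊕ τ)),
      N.start = Sum.inl M.start ∧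
      (∀ (q : σ) (a : α), N.step (Sum.inl q) (Sum.inl a) = some (Sum.inl (M.step q a))) ∧
      (∀ q : σ,
        N.rightLang (Sum.inl q) ∩ {w | ∀ x ∈ w, ∃ a : α, x = Sum.inl a}
          = List.map (Sum.inl : α → α ⊕ β) '' M.rightLang q ∧
        N.leftLang (Sum.inl q)
          = List.map (Sum.inl : α → α ⊕ β) '' {w : List α | M.eval w = q}) ∧
      (∀ q1 q2 : σ, r q1 q2 →
        symmDiff (N.rightLang (Sum.inl q1)) (N.rightLang (Sum.inl q2))
          = List.map (Sum.inl : α → α ⊕ β) ''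
              symmDiff (M.rightLang q1) (M.rightLang q2)) ∧
      (∀ (t : τ) (p2 : σ ⊕ τ), Sum.inr t ≠ p2 →
        (symmDiff (N.rightLang (Sum.inr t)) (N.rightLang p2)).Infinite) ∧
      (∀ q1 q2 : σ, ¬ r q1 q2 →
        (symmDiff (N.rightLang (Sum.inl q1)) (N.rightLang (Sum.inl q2))).Infinite) :=
  ⟨Option σ, Unit, inferInstance, inferInstance, M.congruenceGadget r, rfl,
    M.congruenceGadget_step_inl_inl r,
    fun q => ⟨M.congruenceGadget_rightLang_inl_inter r q, M.congruenceGadget_leftLang_inl r q⟩,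
    fun _ _ h => M.congruenceGadget_symmDiff_rightLang_inl r hequiv hcong h,
    fun t _ hp => M.congruenceGadget_symmDiff_rightLang_inr_infinite r t hp,
    fun _ _ h => M.congruenceGadget_symmDiff_rightLang_inl_infinite r hequiv.refl h⟩

/-- The congruence gadget: for every congruence `≃` on a total DFA `M`, there is a
(partial) DFA `N` extending `M` with new states `τ` and new letters `β` such that
(1) `L_M(q) = L_N(q) ∩ Σ*` and `δ⁻¹(q) = μ⁻¹(q)` for all `q ∈ Q`,
(2) `L_M(q₁) △ L_M(q₂) = L_N(q₁) △ L_N(q₂)` for all `q₁ ≃ q₂`,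
(3) every new state is hyper-inequivalent to every other state, and
(4) `q₁ ≄ q₂` implies that `q₁` and `q₂` are hyper-inequivalent in `N`. -/
theorem congruence_gadget {α σ : Type} [Fintype α] [Fintype σ] (M : DFA α σ)
    (r : σ → σ → Prop) (hequiv : Equivalence r)
    (hcong : ∀ (q1 q2 : σ) (a : α), r q1 q2 → r (M.step q1 a) (M.step q2 a)) :
    ∃ (β τ : Type) (_ : Fintype β) (_ : Fintype τ) (N : PDFA (α ⊕ β) (σ ⊕ τ)),
      N.start = Sum.inl M.start ∧
      (∀ (q : σ) (a : α), N.step (Sum.inl q) (Sum.inl a) = some (Sum.inl (M.step q a))) ∧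
      (∀ q : σ,
        N.rightLang (Sum.inl q) ∩ {w | ∀ x ∈ w, ∃ a : α, x = Sum.inl a}
          = List.map (Sum.inl : α → α ⊕ β) '' M.rightLang q ∧
        N.leftLang (Sum.inl q)
          = List.map (Sum.inl : α → α ⊕ β) '' {w : List α | M.eval w = q}) ∧
      (∀ q1 q2 : σ, r q1 q2 →
        symmDiff (N.rightLang (Sum.inl q1)) (N.rightLang (Sum.inl q2))
          = List.map (Sum.inl : α → α ⊕ β) ''
              symmDiff (M.rightLang q1) (M.rightLang q2)) ∧
      (∀ (t : τ) (p2 : σ ⊕ τ), Sum.inr t ≠ p2 →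
        (symmDiff (N.rightLang (Sum.inr t)) (N.rightLang p2)).Infinite) ∧
      (∀ q1 q2 : σ, ¬ r q1 q2 →
        (symmDiff (N.rightLang (Sum.inl q1)) (N.rightLang (Sum.inl q2))).Infinite) :=
  congruence_gadget_general M r hequiv hcong
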